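/- Let (T, H, C) be a biadditive THC-situation between abelian categories 𝒜₁, 𝒜₂, 𝒜₃ such that 𝒜₁ and 𝒜₂ have enough flat objects and 𝒜₃ has enough injectives. Then the class ℱ of flat objects of 𝒜₂ forms the left class of a cotorsion theory: (ℱ, ℱ^⊥) is a cotorsion theory, i.e. ℱ = ^⊥(ℱ^⊥). -/

import Mathlib

/-!
Flat objects lie in `⊥(ℱ⊥)` because every sequence `Y ↣ E ↠ P` with `Y ∈ ℱ⊥`, `P ∈ ℱ` splits.
Conversely let `X ∈ ⊥(ℱ⊥)` and `f : A ↣ B`, and embed `T(A,X) ↣ J` with `J` injective.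
The functor `C(−,J) : 𝒜₁ᵒᵖ ⥤ 𝒜₂` is a right adjoint, and it sends `f` to an epimorphism because
`𝒜₂` has enough flat objects; so `C(coker f,J) ↣ C(B,J) ↠ C(A,J)` is short exact. Its kernel lies
in `ℱ⊥`: a diagram chase through a flat cover of `coker f` shows that `T(coker f, −)` keeps
`W ↣ E` monic whenever `E/W` is flat, so the counit `T(coker f, C(coker f,J)) → J` extends along it.
Hence the adjunct `X → C(A,J)` of `T(A,X) ↣ J` lifts to `C(B,J)`, that is, `T(A,X) ↣ J` factors
through `T(f,X)`, which is therefore a monomorphism.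
-/

open CategoryTheory Limits Opposite

universe w v u v₁ u₁ v₂ u₂ v₃ u₃

/-- A biadditive THC-situation (adjunction of two variables) between three
abelian categories: bifunctors `T`, `H`, `C` with adjunctions
`Hom(T(X₁,X₂),X₃) ≅ Hom(X₁,H(X₂,X₃)) ≅ Hom(X₂,C(X₁,X₃))`, all biadditive. -/
structure THC (𝒜₁ : Type u₁) (𝒜₂ : Type u₂) (𝒜₃ : Type u₃)
    [Category.{v₁} 𝒜₁] [Category.{v₂} 𝒜₂] [Category.{v₃} 𝒜₃]
    [Abelian 𝒜₁] [Abelian 𝒜₂] [Abelian 𝒜₃] where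
  T : 𝒜₁ ⥤ 𝒜₂ ⥤ 𝒜₃
  H : 𝒜₂ᵒᵖ ⥤ 𝒜₃ ⥤ 𝒜₁
  C : 𝒜₁ᵒᵖ ⥤ 𝒜₃ ⥤ 𝒜₂
  adjT₂ : ∀ X₁ : 𝒜₁, T.obj X₁ ⊣ C.obj (op X₁)
  adjT₁ : ∀ X₂ : 𝒜₂, T.flip.obj X₂ ⊣ H.obj (op X₂)
  addT₁ : ∀ X₂ : 𝒜₂, (T.flip.obj X₂).Additive
  addT₂ : ∀ X₁ : 𝒜₁, (T.obj X₁).Additive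
  addH₁ : ∀ X₃ : 𝒜₃, (H.flip.obj X₃).Additive
  addH₂ : ∀ X₂ : 𝒜₂ᵒᵖ, (H.obj X₂).Additive
  addC₁ : ∀ X₃ : 𝒜₃, (C.flip.obj X₃).Additive
  addC₂ : ∀ X₁ : 𝒜₁ᵒᵖ, (C.obj X₁).Additive

variable {𝒜₁ : Type u₁} {𝒜₂ : Type u₂} {𝒜₃ : Type u₃}
  [Category.{v₁} 𝒜₁] [Category.{v₂} 𝒜₂] [Category.{v₃} 𝒜₃]
  [Abelian 𝒜₁] [Abelian 𝒜₂] [Abelian 𝒜₃]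

/-- An object `P` of `𝒜₂` is flat if `T(−, P)` preserves monomorphisms. -/
def THC.Flat₂ (S : THC 𝒜₁ 𝒜₂ 𝒜₃) (P : 𝒜₂) : Prop :=
  ∀ ⦃X Y : 𝒜₁⦄ (f : X ⟶ Y), Mono f → Mono ((S.T.flip.obj P).map f)

/-- An object `P` of `𝒜₁` is flat if `T(P, −)` preserves monomorphisms. -/
def THC.Flat₁ (S : THC 𝒜₁ 𝒜₂ 𝒜₃) (P : 𝒜₁) : Prop :=
  ∀ ⦃X Y : 𝒜₂⦄ (f : X ⟶ Y), Mono f → Mono ((S.T.obj P).map f)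

variable {𝒞 : Type u} [Category.{v} 𝒞] [Abelian 𝒞]

/-- `Y ∈ rightPerpSplit K` iff every short exact sequence `Y ↣ E ↠ Q` with `Q ∈ K`
splits. -/
def rightPerpSplit (K : Set 𝒞) : Set 𝒞 :=
  {Y | ∀ ⦃E Q : 𝒞⦄ (i : Y ⟶ E) (p : E ⟶ Q) (w : i ≫ p = 0),
    (ShortComplex.mk i p w).ShortExact → Q ∈ K → ∃ r : E ⟶ Y, i ≫ r = 𝟙 Y}

/-- `X ∈ leftPerpSplit K` iff every short exact sequence `Y ↣ E ↠ X` with `Y ∈ K`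
splits. -/
def leftPerpSplit (K : Set 𝒞) : Set 𝒞 :=
  {X | ∀ ⦃Y E : 𝒞⦄ (i : Y ⟶ E) (p : E ⟶ X) (w : i ≫ p = 0),
    (ShortComplex.mk i p w).ShortExact → Y ∈ K → ∃ s : X ⟶ E, s ≫ p = 𝟙 X}


namespace CategoryTheory

open Abelian Pseudoelement

variable {𝒞₁ 𝒞₂ 𝒞₃ : Type*} [Category 𝒞₁] [Category 𝒞₂] [Category 𝒞₃]
  [Abelian 𝒞₁] [Abelian 𝒞₂] [Abelian 𝒞₃]

lemma ShortComplex.ShortExact.map_of_isRightAdjoint {E : ShortComplex 𝒞₁} (hE : E.ShortExact)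
    (G : 𝒞₁ ⥤ 𝒞₂) [G.IsRightAdjoint] (hg : Epi (G.map E.g)) : (E.map G).ShortExact where
  exact := hE.exact.map_of_mono_of_preservesKernel G hE.mono_f inferInstance
  mono_f := by have := hE.mono_f; exact G.map_mono E.f
  epi_g := hg

open scoped Pseudoelement in
/-- A chase through the grid `F(R.Xᵢ, L.Xⱼ)`: the balancing of `Tor₁` in disguise. -/
lemma Functor.mono_obj_map_f_of_shortExact (F : 𝒞₁ ⥤ 𝒞₂ ⥤ 𝒞₃)
    [∀ X₁, PreservesFiniteColimits (F.obj X₁)] [∀ X₂, PreservesFiniteColimits (F.flip.obj X₂)]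
    {R : ShortComplex 𝒞₁} (hR : R.ShortExact) {L : ShortComplex 𝒞₂} (hL : L.ShortExact)
    (h₂ : Mono ((F.obj R.X₂).map L.f)) (h₃ : Mono ((F.map R.f).app L.X₃)) :
    Mono ((F.obj R.X₃).map L.f) := by
  have := hR.epi_g
  have := hL.epi_g
  have : Epi ((F.map R.g).app L.X₁) := (F.flip.obj L.X₁).map_epi R.g
  have exactRow : ∀ b, (F.map R.g).app L.X₂ b = 0 → ∃ a, (F.map R.f).app L.X₂ a = b :=
    pseudo_exact_of_exact
      (hR.exact.map_of_epi_of_preservesCokernel (F.flip.obj L.X₂) hR.epi_g inferInstance)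
  have exactCol : ∀ b, (F.obj R.X₁).map L.g b = 0 → ∃ a, (F.obj R.X₁).map L.f a = b :=
    pseudo_exact_of_exact (hL.exact.map_of_epi_of_preservesCokernel _ hL.epi_g inferInstance)
  refine mono_of_zero_of_map_zero _ fun x hx => ?_
  obtain ⟨y, rfl⟩ := pseudo_surjective_of_epi ((F.map R.g).app L.X₁) x
  obtain ⟨z, hz⟩ := exactRow ((F.obj R.X₂).map L.f y) (by
    rw [← Pseudoelement.comp_apply, (F.map R.g).naturality, Pseudoelement.comp_apply, hx])
  obtain ⟨w, rfl⟩ := exactCol z (by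
    refine Pseudoelement.zero_of_map_zero _ (pseudo_injective_of_mono ((F.map R.f).app L.X₃)) _ ?_
    rw [← Pseudoelement.comp_apply, (F.map R.f).naturality, Pseudoelement.comp_apply, hz,
      ← Pseudoelement.comp_apply, ← Functor.map_comp, L.zero, Functor.map_zero,
      Pseudoelement.zero_apply])
  obtain rfl : (F.map R.f).app L.X₁ w = y := by
    apply pseudo_injective_of_mono ((F.obj R.X₂).map L.f)
    rw [← Pseudoelement.comp_apply, ← (F.map R.f).naturality, Pseudoelement.comp_apply, hz]
  change (F.flip.obj L.X₁).map R.g ((F.flip.obj L.X₁).map R.f w) = 0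
  rw [← Pseudoelement.comp_apply, ← Functor.map_comp, R.zero, Functor.map_zero,
    Pseudoelement.zero_apply]

end CategoryTheory

lemma subset_leftPerpSplit_rightPerpSplit (K : Set 𝒞) : K ⊆ leftPerpSplit (rightPerpSplit K) :=
  fun _ hX _ _ i p w hE hY =>
    have ⟨r, hr⟩ := hY i p w hE hX
    have splitting := ShortComplex.Splitting.ofExactOfRetraction _ hE.exact r hr hE.epi_g
    ⟨splitting.s, splitting.s_g⟩

/-- Pull the sequence back along `φ`; the resulting extension of `X` by `E.X₁` splits. -/
lemma exists_lift_of_mem_leftPerpSplit {K : Set 𝒞} {X : 𝒞} (hX : X ∈ leftPerpSplit K)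
    {E : ShortComplex 𝒞} (hE : E.ShortExact) (hE₁ : E.X₁ ∈ K) (φ : X ⟶ E.X₃) :
    ∃ ψ : X ⟶ E.X₂, ψ ≫ E.g = φ := by
  have := hE.mono_f
  have := hE.epi_g
  let k : E.X₁ ⟶ pullback E.g φ := pullback.lift E.f 0 (by simp)
  have hk : k ≫ pullback.snd E.g φ = 0 := pullback.lift_snd _ _ _
  have : Mono k := mono_of_mono_fac (pullback.lift_fst _ _ _)
  have hkIsKernel : IsLimit (KernelFork.ofι k hk) :=
    KernelFork.IsLimit.ofι' k hk fun t ht =>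
      have ht' : (t ≫ pullback.fst E.g φ) ≫ E.g = 0 := by
        rw [Category.assoc, pullback.condition, ← Category.assoc, ht, zero_comp]
      ⟨hE.exact.lift _ ht', pullback.hom_ext
        (by rw [Category.assoc, pullback.lift_fst, hE.exact.lift_f])
        (by rw [Category.assoc, pullback.lift_snd, comp_zero, ht])⟩
  obtain ⟨s, hs⟩ := hX k (pullback.snd E.g φ) hk
    { exact := ShortComplex.exact_of_f_is_kernel _ hkIsKernel } hE₁
  refine ⟨s ≫ pullback.fst _ _, ?_⟩
  rw [Category.assoc, pullback.condition, ← Category.assoc, hs, Category.id_comp]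

namespace THC

variable (S : THC 𝒜₁ 𝒜₂ 𝒜₃)

instance (X₁ : 𝒜₁) : (S.T.obj X₁).IsLeftAdjoint := (S.adjT₂ X₁).isLeftAdjoint

instance (X₂ : 𝒜₂) : (S.T.flip.obj X₂).IsLeftAdjoint := (S.adjT₁ X₂).isLeftAdjoint

/-- The structure does not tie the action of `C` on morphisms of `𝒜₁` to the adjunctions, so we
replace it by the functoriality transported from `T` through them. -/
noncomputable def conjC : 𝒜₁ᵒᵖ ⥤ 𝒜₃ ⥤ 𝒜₂ where
  obj X₁ := S.C.obj X₁
  map f := conjugateEquiv (S.adjT₂ _) (S.adjT₂ _) (S.T.map f.unop)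
  map_id X := by simp
  map_comp f g := by simp

noncomputable def parametrizedAdjunction : S.T ⊣₂ S.conjC :=
  .mk' S.adjT₂ fun {X₁ Y₁} f X₂ X₃ g => by
    change (S.adjT₂ X₁).homEquiv X₂ X₃ _ = (S.adjT₂ Y₁).homEquiv X₂ X₃ g ≫
      (conjugateEquiv (S.adjT₂ Y₁) (S.adjT₂ X₁) (S.T.map f)).app X₃
    rw [Adjunction.homEquiv_unit, Adjunction.homEquiv_unit, Category.assoc,
      NatTrans.naturality, ← Category.assoc, unit_conjugateEquiv, Category.assoc,
      ← Functor.map_comp]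

/-- `Hom(op H(V,I), X) ≅ Hom(T(X.unop,V), I) ≅ Hom(V, C(X.unop,I))`. -/
instance (I : 𝒜₃) : (S.conjC.flip.obj I).IsRightAdjoint :=
  ⟨_, ⟨Adjunction.adjunctionOfEquivLeft
    (F_obj := fun V : 𝒜₂ => op ((S.H.obj (op V)).obj I))
    (fun V X => (opEquiv _ X).trans
      (((S.adjT₁ V).homEquiv X.unop I).symm.trans S.parametrizedAdjunction.homEquiv))
    (fun V X X' g h => by
      change S.parametrizedAdjunction.homEquiv
        (((S.adjT₁ V).homEquiv _ I).symm (g.unop ≫ h.unop)) = _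
      rw [(S.adjT₁ V).homEquiv_naturality_left_symm]
      exact S.parametrizedAdjunction.homEquiv_naturality_one g.unop _)⟩⟩

lemma C_obj_mem_rightPerpSplit (hf1 : ∀ X : 𝒜₁, ∃ (P : 𝒜₁) (p : P ⟶ X), S.Flat₁ P ∧ Epi p)
    (D : 𝒜₁) (I : 𝒜₃) [Injective I] :
    (S.C.obj (op D)).obj I ∈ rightPerpSplit {P : 𝒜₂ | S.Flat₂ P} := by
  intro E Q i p w hL hQ
  obtain ⟨P, ρ, hP, hρ⟩ := hf1 D
  have hR : (ShortComplex.mk (kernel.ι ρ) ρ (kernel.condition ρ)).ShortExact :=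
    { exact := ShortComplex.exact_of_f_is_kernel _ (kernelIsKernel ρ) }
  have : Mono ((S.T.obj D).map i) :=
    S.T.mono_obj_map_f_of_shortExact hR hL (hP i hL.mono_f) (hQ _ inferInstance)
  refine ⟨(S.adjT₂ D).homEquiv E I
    (Injective.factorThru ((S.adjT₂ D).counit.app I) ((S.T.obj D).map i)), ?_⟩
  rw [← Adjunction.homEquiv_naturality_left, Injective.comp_factorThru,
    Adjunction.homEquiv_unit, Adjunction.right_triangle_components]

lemma epi_conjC_map_app (hf2 : ∀ X : 𝒜₂, ∃ (P : 𝒜₂) (p : P ⟶ X), S.Flat₂ P ∧ Epi p)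
    {A B : 𝒜₁} (f : A ⟶ B) [Mono f] (I : 𝒜₃) [Injective I] :
    Epi ((S.conjC.map f.op).app I) := by
  obtain ⟨P, q, hP, hq⟩ := hf2 ((S.conjC.flip.obj I).obj (op A))
  have : Mono ((S.T.map f).app P) := hP f inferInstance
  have hfac : S.parametrizedAdjunction.homEquiv (Injective.factorThru
      (S.parametrizedAdjunction.homEquiv.symm q) ((S.T.map f).app P)) ≫
        (S.conjC.map f.op).app I = q := by
    rw [← S.parametrizedAdjunction.homEquiv_naturality_one, Injective.comp_factorThru,
      Equiv.apply_symm_apply]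
  exact epi_of_epi_fac hfac

lemma flat₂_of_mem_leftPerpSplit [EnoughInjectives 𝒜₃]
    (hf1 : ∀ X : 𝒜₁, ∃ (P : 𝒜₁) (p : P ⟶ X), S.Flat₁ P ∧ Epi p)
    (hf2 : ∀ X : 𝒜₂, ∃ (P : 𝒜₂) (p : P ⟶ X), S.Flat₂ P ∧ Epi p) {X : 𝒜₂}
    (hX : X ∈ leftPerpSplit (rightPerpSplit {P : 𝒜₂ | S.Flat₂ P})) : S.Flat₂ X := by
  intro A B f hf
  let J := Injective.under ((S.T.obj A).obj X)
  have hE : (ShortComplex.mk f (cokernel.π f) (cokernel.condition f)).ShortExact :=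
    { exact := ShortComplex.exact_of_g_is_cokernel _ (cokernelIsCokernel f) }
  obtain ⟨ψ, hψ⟩ : ∃ ψ : X ⟶ (S.conjC.obj (op B)).obj J, ψ ≫ (S.conjC.map f.op).app J =
      S.parametrizedAdjunction.homEquiv (Injective.ι ((S.T.obj A).obj X)) :=
    exists_lift_of_mem_leftPerpSplit hX
      (hE.op.map_of_isRightAdjoint (S.conjC.flip.obj J) (S.epi_conjC_map_app hf2 f J))
      (S.C_obj_mem_rightPerpSplit hf1 (cokernel f) J) _
  have hfac : (S.T.map f).app X ≫ S.parametrizedAdjunction.homEquiv.symm ψ =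
      Injective.ι ((S.T.obj A).obj X) := by
    rw [← S.parametrizedAdjunction.homEquiv_symm_naturality_one, Equiv.symm_apply_eq, hψ]
  have : Mono (Injective.ι ((S.T.obj A).obj X)) := inferInstance
  exact mono_of_mono_fac hfac

end THC

/-- The flat objects of `𝒜₂` form the left class of a cotorsion theory. -/
theorem statement10 (S : THC 𝒜₁ 𝒜₂ 𝒜₃) [EnoughInjectives 𝒜₃]
    (hf1 : ∀ X : 𝒜₁, ∃ (P : 𝒜₁) (p : P ⟶ X), S.Flat₁ P ∧ Epi p)
    (hf2 : ∀ X : 𝒜₂, ∃ (P : 𝒜₂) (p : P ⟶ X), S.Flat₂ P ∧ Epi p) :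
    leftPerpSplit (rightPerpSplit {P : 𝒜₂ | S.Flat₂ P}) = {P : 𝒜₂ | S.Flat₂ P} :=
  subset_antisymm (fun _ hX => S.flat₂_of_mem_leftPerpSplit hf1 hf2 hX)
    (subset_leftPerpSplit_rightPerpSplit _)
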